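/- Fix n ≥ 1. Let F be a maximal intersecting subfamily of P([n]) and let A ∈ F be a minimal set of F (i.e., no proper subset of A belongs to F). Define G = ({B ⊆ [n+1] : B ∩ [n] ∈ F} \ {A}) ∪ {[n+1]\A} and G* = {[n+1]\B : B ∈ G}. Then {B ⊆ [n] : B ∈ G* and B ∪ {n+1} ∉ G*} = {A, [n]\A}. -/

import Mathlib

open Finset

variable {m : ℕ}

/-- A family of finsets is intersecting if any two members meet. -/
def IsIntersecting (F : Finset (Finset (Fin m))) : Prop :=
  ∀ A ∈ F, ∀ B ∈ F, (A ∩ B).Nonempty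

/-- A maximal intersecting subfamily of the power set of `Fin m`. -/
def IsMaxIntersecting (F : Finset (Finset (Fin m))) : Prop :=
  IsIntersecting F ∧ ∀ G : Finset (Finset (Fin m)), IsIntersecting G → F ⊆ G → G ⊆ F

/-- A family is subset-closed if it contains all subsets of its members. -/
def IsSubsetClosed (F : Finset (Finset (Fin m))) : Prop :=
  ∀ A ∈ F, ∀ B ⊆ A, B ∈ F

/-- The embedding of a family into `ℝ^{P([m])}`. -/
def famVec (F : Finset (Finset (Fin m))) : Finset (Fin m) → ℝ := fun A =>
  if A ∈ F ∧ Aᶜ ∉ F then 1 else if A ∉ F ∧ Aᶜ ∈ F then -1 else 0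

/-- The standard basis vector `e_A` of `ℝ^{P([m])}`. -/
def stdBasis (A : Finset (Fin m)) : Finset (Fin m) → ℝ := fun B => if B = A then 1 else 0

/-- The star of a family centered at `a`. -/
def starFam (a : Fin m) (F : Finset (Finset (Fin m))) : Finset (Finset (Fin m)) :=
  F.filter fun A => a ∈ A

/-- The setwise complement (dual) `F* = {Aᶜ : A ∈ F}`. -/
def dualFam (F : Finset (Finset (Fin m))) : Finset (Finset (Fin m)) :=
  F.image fun A => Aᶜ

/-- The copy of `[n]` inside `Fin (n+1)`. -/
def groundN (n : ℕ) : Finset (Fin (n + 1)) := Finset.univ.filter fun x => (x : ℕ) < n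

/-- The family `G = ({B ⊆ [n+1] : B ∩ [n] ∈ F} \ {A}) ∪ {[n+1] \ A}`. -/
def gFam (n : ℕ) (F : Finset (Finset (Fin (n + 1)))) (A : Finset (Fin (n + 1))) :
    Finset (Finset (Fin (n + 1))) :=
  ((Finset.univ.filter fun B : Finset (Fin (n + 1)) => B ∩ groundN n ∈ F).erase A) ∪ {Aᶜ}

/-!
Write `S = [n] \ B` for `B ⊆ [n]`. Then `B ∈ G*` iff `[n+1] \ B ∈ G` iff `S ∈ F` or `B = A`, while
`B ∪ {n+1} ∈ G*` iff `S ∈ G` iff `S ∈ F` and `S ≠ A`. So `B` lies in the fiber exactly when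
`S = A`, or when `B = A` and `S ∉ F`; for `B = A` the condition `S ∉ F` is automatic, since
`[n] \ A` misses `A ∈ F` and `F` is intersecting.
-/

lemma mem_dualFam {G : Finset (Finset (Fin m))} {X : Finset (Fin m)} :
    X ∈ dualFam G ↔ Xᶜ ∈ G := by
  simp only [dualFam, mem_image]
  exact ⟨by rintro ⟨Y, hY, rfl⟩; simpa, fun h => ⟨Xᶜ, h, compl_compl X⟩⟩

section Extension

variable {n : ℕ}

lemma mem_gFam {F : Finset (Finset (Fin (n + 1)))} {A X : Finset (Fin (n + 1))} :
    X ∈ gFam n F A ↔ (X ≠ A ∧ X ∩ groundN n ∈ F) ∨ X = Aᶜ := by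
  simp [gFam, or_comm]

lemma last_notMem_groundN : Fin.last n ∉ groundN n := by
  simp [groundN]

lemma last_notMem_of_subset_groundN {B : Finset (Fin (n + 1))} (hB : B ⊆ groundN n) :
    Fin.last n ∉ B :=
  fun h => last_notMem_groundN (hB h)

lemma compl_insert_last (B : Finset (Fin (n + 1))) :
    (insert (Fin.last n) B)ᶜ = groundN n \ B := by
  ext x
  have hx : (x : ℕ) ≤ n := Nat.lt_succ_iff.mp x.isLt
  simp only [mem_compl, mem_insert, mem_sdiff, groundN, mem_filter, mem_univ, true_and, not_or,
    Fin.ext_iff, Fin.val_last]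
  constructor <;> rintro ⟨h1, h2⟩ <;> exact ⟨by omega, h2⟩

lemma compl_inter_groundN (B : Finset (Fin (n + 1))) : Bᶜ ∩ groundN n = groundN n \ B := by
  ext x
  simp [and_comm]

variable {F : Finset (Finset (Fin (n + 1)))} {A B : Finset (Fin (n + 1))}

lemma compl_mem_gFam_iff (hA : A ⊆ groundN n) (hB : B ⊆ groundN n) :
    Bᶜ ∈ gFam n F A ↔ groundN n \ B ∈ F ∨ B = A := by
  have hBA : Bᶜ ≠ A := fun h =>
    last_notMem_of_subset_groundN hA (h ▸ mem_compl.2 (last_notMem_of_subset_groundN hB))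
  rw [mem_gFam, compl_inter_groundN, compl_inj_iff]
  simp only [hBA, ne_eq, not_false_eq_true, true_and]

lemma groundN_sdiff_mem_gFam_iff (hA : A ⊆ groundN n) :
    groundN n \ B ∈ gFam n F A ↔ groundN n \ B ∈ F ∧ groundN n \ B ≠ A := by
  have hBA : groundN n \ B ≠ Aᶜ := fun h =>
    last_notMem_groundN (mem_sdiff.1 (h ▸ mem_compl.2 (last_notMem_of_subset_groundN hA))).1
  rw [mem_gFam, inter_eq_left.2 sdiff_subset]
  simp only [hBA, or_false, and_comm]

lemma mem_fiber_iff (hA : A ⊆ groundN n) (hB : B ⊆ groundN n) :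
    (B ∈ dualFam (gFam n F A) ∧ insert (Fin.last n) B ∉ dualFam (gFam n F A)) ↔
      (groundN n \ B ∈ F ∨ B = A) ∧ (groundN n \ B ∈ F → groundN n \ B = A) := by
  rw [mem_dualFam, mem_dualFam, compl_insert_last, compl_mem_gFam_iff hA hB,
    groundN_sdiff_mem_gFam_iff hA, not_and_not_right]

lemma groundN_sdiff_notMem (hFi : IsIntersecting F) (hA : A ∈ F) : groundN n \ A ∉ F := by
  intro h
  obtain ⟨x, hx⟩ := hFi A hA _ h
  simp only [mem_inter, mem_sdiff] at hx
  exact hx.2.2 hx.1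

end Extension

theorem gFam_fiber_general (n : ℕ)
    (F : Finset (Finset (Fin (n + 1))))
    (hFsub : ∀ B ∈ F, B ⊆ groundN n)
    (hFi : IsIntersecting F)
    (A : Finset (Fin (n + 1))) (hA : A ∈ F) :
    (groundN n).powerset.filter
        (fun B => B ∈ dualFam (gFam n F A) ∧ insert (Fin.last n) B ∉ dualFam (gFam n F A))
      = {A, groundN n \ A} := by
  have hAsub : A ⊆ groundN n := hFsub A hA
  have hAc : groundN n \ A ∉ F := groundN_sdiff_notMem hFi hA
  ext B
  rw [mem_filter, mem_powerset, mem_insert, mem_singleton]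
  constructor
  · rintro ⟨hB, hfib⟩
    rw [mem_fiber_iff hAsub hB] at hfib
    obtain ⟨hS | rfl, hSA⟩ := hfib
    · exact Or.inr ((sdiff_eq_comm hB hAsub).1 (hSA hS)).symm
    · exact Or.inl rfl
  · rintro (rfl | rfl)
    · exact ⟨hAsub, (mem_fiber_iff hAsub hAsub).2 ⟨Or.inr rfl, fun h => absurd h hAc⟩⟩
    · have hS : groundN n \ (groundN n \ A) = A := Finset.sdiff_sdiff_eq_self hAsub
      refine ⟨sdiff_subset, (mem_fiber_iff hAsub sdiff_subset).2 ?_⟩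
      rw [hS]
      exact ⟨Or.inl hA, fun _ => rfl⟩

/-- For the construction `G` from a maximal intersecting `F ⊆ P([n])` and a minimal `A ∈ F`,
the fiber `{B ⊆ [n] : B ∈ G* ∧ B ∪ {n+1} ∉ G*}` is exactly `{A, [n] \ A}`. -/
theorem gFam_fiber (n : ℕ) (hn : 1 ≤ n)
    (F : Finset (Finset (Fin (n + 1))))
    (hFsub : ∀ B ∈ F, B ⊆ groundN n)
    (hFi : IsIntersecting F)
    (hFmax : ∀ G : Finset (Finset (Fin (n + 1))),
      (∀ B ∈ G, B ⊆ groundN n) → IsIntersecting G → F ⊆ G → G ⊆ F)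
    (A : Finset (Fin (n + 1))) (hA : A ∈ F) (hAmin : ∀ B ⊂ A, B ∉ F) :
    (groundN n).powerset.filter
        (fun B => B ∈ dualFam (gFam n F A) ∧ insert (Fin.last n) B ∉ dualFam (gFam n F A))
      = {A, groundN n \ A} :=
  gFam_fiber_general n F hFsub hFi A hA
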